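/- If U is an ultrafilter on βℕ that is uniformly recurrent for the shift S(V) = 1 + V and proximal to the principal ultrafilter at 0, then U is idempotent: U + U = U. -/

import Mathlib

open Filter

/-- The sum of two ultrafilters on ℕ:
`X ∈ uadd U V ↔ {m | {n | m + n ∈ X} ∈ V} ∈ U`. -/
def uadd (U V : Ultrafilter ℕ) : Ultrafilter ℕ :=
  Ultrafilter.bind U (fun m => Ultrafilter.map (fun n => m + n) V)

/-- The shift map on βℕ, `S(V) = 1 + V`. -/
def shift (V : Ultrafilter ℕ) : Ultrafilter ℕ := uadd (pure 1) V

/-!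
In βℕ with the right-topological sum `V + U`, the orbit of `U` under the shift is `pure n + U`,
so its closure is `βℕ + U`. Proximality of `U` and `0` says that the closed graph of
`V ↦ V + U` meets the diagonal, giving `V` with `V + U = V`. Uniform recurrence makes the orbit
closure of `U` minimal, so `U` lies in the orbit closure of `V + U`, i.e. `W + V + U = U` for
some `W`. Then `W + V = W + (V + U) = U`, and `U + U = W + V + U = U`.
-/

open Set Topology

section Dynamics

variable {X : Type*} [TopologicalSpace X] {f : X → X}

theorem mem_closure_range_iterate_of_uniformlyRecurrent [RegularSpace X] (hf : Continuous f)
    {x y : X} (hx : ∀ G ∈ 𝓝 x, ∃ M : ℕ, ∀ n : ℕ, ∃ k < M, f^[n + k] x ∈ G)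
    (hy : y ∈ closure (range fun n => f^[n] x)) :
    x ∈ closure (range fun n => f^[n] y) := by
  refine mem_closure_iff_nhds.mpr fun G hG => ?_
  obtain ⟨G', hG'x, hG'closed, hG'G⟩ := exists_mem_nhds_isClosed_subset hG
  obtain ⟨M, hM⟩ := hx G' hG'x
  -- Entering `G'` within `M` steps is a closed condition, so it passes from the orbit of `x`
  -- to `y`.
  have hreturn : closure (range fun n => f^[n] x) ⊆ ⋃ k ∈ Finset.range M, f^[k] ⁻¹' G' := by
    refine closure_minimal ?_ (isClosed_biUnion_finset fun k _ =>
      hG'closed.preimage (hf.iterate k))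
    rintro _ ⟨n, rfl⟩
    obtain ⟨k, hkM, hk⟩ := hM n
    rw [add_comm, Function.iterate_add_apply] at hk
    exact mem_biUnion (Finset.mem_range.mpr hkM) hk
  obtain ⟨k, -, hk⟩ := mem_iUnion₂.mp (hreturn hy)
  exact ⟨f^[k] y, hG'G hk, k, rfl⟩

theorem exists_fixed_of_forall_mem_nhdsSet_diagonal [CompactSpace X] [T2Space X]
    (hf : Continuous f) (h : ∀ G ∈ 𝓝ˢ (diagonal X), ∃ x, (f x, x) ∈ G) :
    ∃ x, f x = x := by
  by_contra! hne
  have hgraph : IsClosed (range fun x => (f x, x)) :=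
    (isCompact_range (hf.prodMk continuous_id)).isClosed
  have hdisj : diagonal X ⊆ (range fun x => (f x, x))ᶜ := by
    rintro _ hd ⟨x, rfl⟩
    exact hne x hd
  obtain ⟨x, hx⟩ := h _ (hgraph.isOpen_compl.mem_nhdsSet.mpr hdisj)
  exact hx ⟨x, rfl⟩

end Dynamics

theorem add_self_eq_of_exists_add_eq_self {S : Type*} [AddSemigroup S] {u : S}
    (hleft : ∀ v, ∃ w, w + (v + u) = u) (hfix : ∃ v, v + u = v) : u + u = u := by
  obtain ⟨v, hv⟩ := hfix
  obtain ⟨w, hw⟩ := hleft v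
  rw [hv] at hw
  nth_rewrite 1 [← hw]
  rw [add_assoc, hv, hw]

attribute [local instance] Ultrafilter.add Ultrafilter.addSemigroup

theorem uadd_eq_add (U V : Ultrafilter ℕ) : uadd U V = U + V := rfl

theorem Ultrafilter.pure_add_pure (a b : ℕ) :
    (pure a : Ultrafilter ℕ) + pure b = pure (a + b) := rfl

theorem Ultrafilter.pure_zero_add (U : Ultrafilter ℕ) : (pure 0 : Ultrafilter ℕ) + U = U := by
  refine coe_inj.mp (Filter.ext' fun p => ?_)
  simp [eventually_add]

theorem Ultrafilter.pure_add_comm (a : ℕ) (U : Ultrafilter ℕ) :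
    (pure a : Ultrafilter ℕ) + U = U + pure a := by
  refine coe_inj.mp (Filter.ext' fun p => ?_)
  simp [eventually_add, Nat.add_comm]

theorem continuous_shift : Continuous shift :=
  (Ultrafilter.continuous_add_left (pure 1)).congr fun V =>
    (Ultrafilter.pure_add_comm 1 V).symm

theorem shift_iterate (n : ℕ) (U : Ultrafilter ℕ) : shift^[n] U = pure n + U := by
  induction n with
  | zero => exact (Ultrafilter.pure_zero_add U).symm
  | succ n ih =>
    rw [Function.iterate_succ_apply', ih, shift, uadd_eq_add, ← add_assoc,
      Ultrafilter.pure_add_pure, add_comm 1 n]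

theorem closure_range_iterate_shift (U : Ultrafilter ℕ) :
    closure (range fun n => shift^[n] U) = range (· + U) := by
  have hcont := Ultrafilter.continuous_add_left U
  simp_rw [shift_iterate]
  refine subset_antisymm (closure_minimal ?_ (isCompact_range hcont).isClosed) ?_
  · rintro _ ⟨n, rfl⟩
    exact ⟨pure n, rfl⟩
  · have hdense := hcont.range_subset_closure_image_dense denseRange_pure
    rwa [← range_comp] at hdense

theorem exists_add_add_eq_of_uniformlyRecurrent {U : Ultrafilter ℕ}
    (hur : ∀ G ∈ nhds U, ∃ M : ℕ, ∀ n : ℕ, ∃ k < M, shift^[n + k] U ∈ G)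
    (V : Ultrafilter ℕ) : ∃ W, W + (V + U) = U := by
  have hVU : V + U ∈ closure (range fun n => shift^[n] U) := by
    rw [closure_range_iterate_shift]
    exact ⟨V, rfl⟩
  have := mem_closure_range_iterate_of_uniformlyRecurrent continuous_shift hur hVU
  rwa [closure_range_iterate_shift] at this

theorem exists_add_eq_self_of_proximal {U : Ultrafilter ℕ}
    (hprox : ∀ G ∈ nhdsSet (Set.diagonal (Ultrafilter ℕ)),
      {n : ℕ | (shift^[n] U, shift^[n] (pure 0 : Ultrafilter ℕ)) ∈ G}.Infinite) :
    ∃ V, V + U = V := by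
  refine exists_fixed_of_forall_mem_nhdsSet_diagonal (Ultrafilter.continuous_add_left U)
    fun G hG => ?_
  obtain ⟨n, hn⟩ := (hprox G hG).nonempty
  refine ⟨pure n, ?_⟩
  rwa [mem_ofPred_eq, shift_iterate, shift_iterate, Ultrafilter.pure_add_pure] at hn

/-- If `U` is uniformly recurrent for the shift and proximal to the principal
ultrafilter at 0, then `U` is idempotent. -/
theorem idempotent_of_uniformlyRecurrent_proximal (U : Ultrafilter ℕ)
    (hur : ∀ G ∈ nhds U, ∃ M : ℕ, ∀ n : ℕ, ∃ k < M, shift^[n + k] U ∈ G)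
    (hprox : ∀ G ∈ nhdsSet (Set.diagonal (Ultrafilter ℕ)),
      {n : ℕ | (shift^[n] U, shift^[n] (pure 0 : Ultrafilter ℕ)) ∈ G}.Infinite) :
    uadd U U = U := by
  rw [uadd_eq_add]
  exact add_self_eq_of_exists_add_eq_self (exists_add_add_eq_of_uniformlyRecurrent hur)
    (exists_add_eq_self_of_proximal hprox)
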